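/- Let φ be a nonnegative, nonincreasing function on the half line t ≥ k₀ ≥ 0 such that there are positive constants c, α and δ with δ > 1, satisfying φ(h) ≤ c (h−k)^{−α} φ(k)^{δ} for all h > k ≥ k₀. Then φ(k₀ + d) = 0, where d > 0 satisfies d^α = c φ(k₀)^{δ−1} 2^{αδ/(δ−1)}. -/
import Mathlib

open Real Filter

/-- **Stampacchia's lemma.** Let `φ` be a nonnegative, nonincreasing function on the half
line `t ≥ k₀ ≥ 0` and suppose there are positive constants `c, α` and `δ > 1` such that
`φ(h) ≤ c (h-k)^{-α} φ(k)^δ` for all `h > k ≥ k₀`.  Then `φ(k₀ + e) = 0`, where `e > 0`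
satisfies `e^α = c φ(k₀)^{δ-1} 2^{αδ/(δ-1)}`. -/
theorem stampacchia_lemma (k₀ c α δ : ℝ) (hk₀ : 0 ≤ k₀) (hc : 0 < c) (hα : 0 < α)
    (hδ : 1 < δ) (φ : ℝ → ℝ)
    (hnonneg : ∀ t, k₀ ≤ t → 0 ≤ φ t)
    (hmono : ∀ s t, k₀ ≤ s → s ≤ t → φ t ≤ φ s)
    (hineq : ∀ h k, k₀ ≤ k → k < h → φ h ≤ c * (h - k) ^ (-α) * φ k ^ δ)
    (e : ℝ) (he : 0 < e)
    (hedef : e ^ α = c * φ k₀ ^ (δ - 1) * 2 ^ (α * δ / (δ - 1))) :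
    φ (k₀ + e) = 0 := by
  have hP0 : 0 ≤ φ k₀ := hnonneg k₀ le_rfl
  have hke : k₀ ≤ k₀ + e := by linarith
  rcases eq_or_lt_of_le hP0 with hP | hP
  · -- trivial case `φ k₀ = 0`
    have h1 := hineq (k₀ + e) k₀ le_rfl (by linarith)
    have h0 : φ k₀ ^ δ = 0 := by
      rw [← hP, Real.zero_rpow (by linarith)]
    rw [h0, mul_zero] at h1
    exact le_antisymm h1 (hnonneg _ hke)
  · set μ : ℝ := α / (δ - 1) with hμdef
    have hδ1 : 0 < δ - 1 := by linarith
    have hμ : 0 < μ := div_pos hα hδ1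
    have hαμ : α = μ * (δ - 1) := by rw [hμdef, div_mul_cancel₀ _ hδ1.ne']
    have hedef' : e ^ α = c * φ k₀ ^ (δ - 1) * (2:ℝ) ^ (μ * δ) := by
      rw [hedef]; congr 2; rw [hμdef]; ring
    set k : ℕ → ℝ := fun n => k₀ + e - e * (2:ℝ) ^ (-(n:ℝ)) with hk
    have hkk₀ : ∀ n, k₀ ≤ k n := by
      intro n
      have h2 : (2:ℝ) ^ (-(n:ℝ)) ≤ 1 :=
        Real.rpow_le_one_of_one_le_of_nonpos one_le_two (neg_nonpos.mpr (Nat.cast_nonneg n))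
      have h2' : 0 < (2:ℝ) ^ (-(n:ℝ)) := Real.rpow_pos_of_pos two_pos _
      show k₀ ≤ k₀ + e - e * (2:ℝ) ^ (-(n:ℝ))
      nlinarith
    have hklt : ∀ n, k n ≤ k₀ + e := by
      intro n
      have : 0 ≤ e * (2:ℝ) ^ (-(n:ℝ)) := by positivity
      show k₀ + e - e * (2:ℝ) ^ (-(n:ℝ)) ≤ k₀ + e
      linarith
    have hstep : ∀ n : ℕ, k (n + 1) - k n = e * (2:ℝ) ^ (-((n:ℝ) + 1)) := by
      intro n
      have h2 : (2:ℝ) ^ (-(n:ℝ)) = (2:ℝ) ^ (-((n:ℝ) + 1)) * 2 := by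
        rw [← Real.rpow_add_one (by norm_num : (2:ℝ) ≠ 0)]
        ring_nf
      show k₀ + e - e * (2:ℝ) ^ (-((n:ℕ)+1:ℕ):ℝ) - (k₀ + e - e * (2:ℝ) ^ (-(n:ℝ))) = _
      push_cast
      rw [h2]; ring
    have main : ∀ n : ℕ, φ (k n) ≤ φ k₀ * (2:ℝ) ^ (-μ * (n:ℝ)) := by
      intro n
      induction n with
      | zero => simp [hk]
      | succ n ih =>
        have hlt : k n < k (n + 1) := by
          have := hstep n
          nlinarith [Real.rpow_pos_of_pos (by norm_num : (0:ℝ) < 2) (-((n:ℝ) + 1))]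
        have h1 := hineq (k (n + 1)) (k n) (hkk₀ n) hlt
        have hdiff : k (n + 1) - k n = e * (2:ℝ) ^ (-((n:ℝ) + 1)) := hstep n
        rw [hdiff] at h1
        have h2 : φ (k n) ^ δ ≤ (φ k₀ * (2:ℝ) ^ (-μ * (n:ℝ))) ^ δ :=
          Real.rpow_le_rpow (hnonneg _ (hkk₀ n)) ih (by linarith)
        have hpos : 0 ≤ c * (e * (2:ℝ) ^ (-((n:ℝ) + 1))) ^ (-α) := by positivity
        have h3 : φ (k (n + 1)) ≤
            c * (e * (2:ℝ) ^ (-((n:ℝ) + 1))) ^ (-α) * (φ k₀ * (2:ℝ) ^ (-μ * (n:ℝ))) ^ δ :=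
          h1.trans (mul_le_mul_of_nonneg_left h2 hpos)
        have key : c * (e * (2:ℝ) ^ (-((n:ℝ) + 1))) ^ (-α) *
            (φ k₀ * (2:ℝ) ^ (-μ * (n:ℝ))) ^ δ = φ k₀ * (2:ℝ) ^ (-μ * ((n:ℝ) + 1)) := by
          rw [Real.mul_rpow he.le (by positivity), Real.mul_rpow hP.le (by positivity),
            ← Real.rpow_mul (by norm_num : (0:ℝ) ≤ 2),
            ← Real.rpow_mul (by norm_num : (0:ℝ) ≤ 2),
            Real.rpow_neg he.le, hedef', mul_inv, mul_inv,
            ← Real.rpow_neg hP.le, ← Real.rpow_neg (by norm_num : (0:ℝ) ≤ 2)]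
          have e1 : φ k₀ ^ (-(δ - 1)) * φ k₀ ^ δ = φ k₀ := by
            rw [← Real.rpow_add hP]
            norm_num
          have e2 : (2:ℝ) ^ (-(μ * δ)) * (2:ℝ) ^ (-((n:ℝ) + 1) * -α) * (2:ℝ) ^ (-μ * (n:ℝ) * δ)
              = (2:ℝ) ^ (-μ * ((n:ℝ) + 1)) := by
            rw [← Real.rpow_add two_pos, ← Real.rpow_add two_pos]
            congr 1
            rw [hαμ]; ring
          calc c * (c⁻¹ * φ k₀ ^ (-(δ - 1)) * (2:ℝ) ^ (-(μ * δ)) * (2:ℝ) ^ (-((n:ℝ) + 1) * -α)) *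
              (φ k₀ ^ δ * (2:ℝ) ^ (-μ * (n:ℝ) * δ))
              = (c * c⁻¹) * (φ k₀ ^ (-(δ - 1)) * φ k₀ ^ δ) *
                ((2:ℝ) ^ (-(μ * δ)) * (2:ℝ) ^ (-((n:ℝ) + 1) * -α) * (2:ℝ) ^ (-μ * (n:ℝ) * δ)) := by
                ring
            _ = φ k₀ * (2:ℝ) ^ (-μ * ((n:ℝ) + 1)) := by
                rw [e1, e2, mul_inv_cancel₀ hc.ne', one_mul]
        calc φ (k (n + 1)) ≤ _ := h3
          _ = _ := key
          _ = φ k₀ * (2:ℝ) ^ (-μ * ((n:ℕ).succ : ℝ)) := by push_cast; ring_nf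
    -- pass to the limit
    have hq1 : (2:ℝ) ^ (-μ) < 1 :=
      Real.rpow_lt_one_of_one_lt_of_neg one_lt_two (by linarith)
    have hq0 : 0 ≤ (2:ℝ) ^ (-μ) := by positivity
    have htend : Tendsto (fun n : ℕ => φ k₀ * (2:ℝ) ^ (-μ * (n:ℝ))) atTop (nhds 0) := by
      have h := (tendsto_pow_atTop_nhds_zero_of_lt_one hq0 hq1).const_mul (φ k₀)
      rw [mul_zero] at h
      convert h using 2 with n
      rw [← Real.rpow_natCast ((2:ℝ) ^ (-μ)) n, ← Real.rpow_mul (by norm_num : (0:ℝ) ≤ 2)]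
    have hle : ∀ n : ℕ, φ (k₀ + e) ≤ φ k₀ * (2:ℝ) ^ (-μ * (n:ℝ)) := fun n =>
      (hmono (k n) (k₀ + e) (hkk₀ n) (hklt n)).trans (main n)
    exact le_antisymm (ge_of_tendsto' htend hle) (hnonneg _ hke)
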